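/- Let Q be a decomposition of a polyhedron P and let ψ be a linear functional bounded above on P with maximizing face P_ψ. Then Q_ψ := { Q ∈ Q : Q ⊆ P_ψ } is a decomposition of the polyhedron P_ψ. -/
import Mathlib


open Set

variable {V : Type*} [NormedAddCommGroup V] [NormedSpace ℝ V]

/-- A polyhedron: an intersection of finitely many closed half-spaces. -/
def IsPolyhedron (P : Set V) : Prop :=
  ∃ s : Finset ((V →ₗ[ℝ] ℝ) × ℝ), P = {x | ∀ f ∈ s, f.1 x ≤ f.2}

/-- `F` is a face of `P`: the set of maximizers of some linear functional over `P`. -/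
def IsFaceOf (F P : Set V) : Prop :=
  ∃ ψ : V →ₗ[ℝ] ℝ, F = {x ∈ P | ∀ y ∈ P, ψ y ≤ ψ x}

/-- A decomposition `𝒬` of a polyhedron `P`: a collection of nonempty polyhedra, closed
under nonempty faces, any two of whose members meet in a common (possibly empty) face,
and whose union is `P`. -/
structure IsDecomposition (𝒬 : Set (Set V)) (P : Set V) : Prop where
  poly : IsPolyhedron P
  mem_poly : ∀ Q ∈ 𝒬, IsPolyhedron Q ∧ Q.Nonempty
  face_mem : ∀ Q ∈ 𝒬, ∀ R, IsFaceOf R Q → R.Nonempty → R ∈ 𝒬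
  inter_face : ∀ Q ∈ 𝒬, ∀ Q' ∈ 𝒬,
    (IsFaceOf (Q ∩ Q') Q ∧ IsFaceOf (Q ∩ Q') Q') ∨ Q ∩ Q' = ∅
  union_eq : ⋃₀ 𝒬 = P

/-- The face of `P` on which the linear functional `ψ` attains its maximum. -/
def maxFace (P : Set V) (ψ : V →ₗ[ℝ] ℝ) : Set V :=
  {x ∈ P | ∀ y ∈ P, ψ y ≤ ψ x}

/-- If `𝒬` is a decomposition of a polyhedron `P` and `ψ` is a linear functional bounded
above on `P`, then `𝒬_ψ = {Q ∈ 𝒬 : Q ⊆ P_ψ}` is a decomposition of the maximizing face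
`P_ψ`. -/
theorem stmt_19 [FiniteDimensional ℝ V] (𝒬 : Set (Set V)) (P : Set V)
    (hdec : IsDecomposition 𝒬 P) (ψ : V →ₗ[ℝ] ℝ) (hbdd : BddAbove (ψ '' P)) :
    IsDecomposition {Q ∈ 𝒬 | Q ⊆ maxFace P ψ} (maxFace P ψ) := by
  classical
  -- The union equality, proved first since it helps with polyhedrality.
  have hunion : ⋃₀ {Q ∈ 𝒬 | Q ⊆ maxFace P ψ} = maxFace P ψ := by
    apply subset_antisymm
    · intro x hx
      obtain ⟨Q, hQ, hxQ⟩ := hx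
      exact hQ.2 hxQ
    · intro x hx
      have hxP : x ∈ P := hx.1
      rw [← hdec.union_eq] at hxP
      obtain ⟨Q, hQ, hxQ⟩ := hxP
      have hQP : Q ⊆ P := by rw [← hdec.union_eq]; exact subset_sUnion_of_mem hQ
      -- x belongs to the maximizing face of Q
      have hxF : x ∈ maxFace Q ψ := ⟨hxQ, fun y hy => hx.2 y (hQP hy)⟩
      have hFQ : maxFace Q ψ ∈ 𝒬 :=
        hdec.face_mem Q hQ _ ⟨ψ, rfl⟩ ⟨x, hxF⟩
      have hFsub : maxFace Q ψ ⊆ maxFace P ψ := by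
        intro y hy
        refine ⟨hQP hy.1, fun z hz => ?_⟩
        calc ψ z ≤ ψ x := hx.2 z hz
          _ ≤ ψ y := hy.2 x hxQ
      exact ⟨maxFace Q ψ, ⟨hFQ, hFsub⟩, hxF⟩
  refine ⟨?_, ?_, ?_, ?_, hunion⟩
  · -- polyhedrality of maxFace P ψ
    rcases (maxFace P ψ).eq_empty_or_nonempty with he | ⟨x, hx⟩
    · refine ⟨{(0, -1)}, ?_⟩
      rw [he]
      ext y
      simp
    · obtain ⟨s, hs⟩ := hdec.poly
      refine ⟨insert (ψ, ψ x) (insert (-ψ, -ψ x) s), ?_⟩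
      ext y
      constructor
      · rintro ⟨hyP, hy⟩
        intro f hf
        simp only [Finset.mem_insert] at hf
        rcases hf with rfl | rfl | hf
        · exact hx.2 y hyP
        · simpa using hy x hx.1
        · have := hs ▸ hyP
          exact this f hf
      · intro hy
        have hyP : y ∈ P := by
          rw [hs]
          intro f hf
          exact hy f (by simp [hf])
        have h1 : ψ y ≤ ψ x := by simpa using hy (ψ, ψ x) (by simp)
        have h2 : ψ x ≤ ψ y := by
          have := hy (-ψ, -ψ x) (by simp)
          simpa using this
        refine ⟨hyP, fun z hz => ?_⟩
        calc ψ z ≤ ψ x := hx.2 z hz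
          _ ≤ ψ y := h2
  · exact fun Q hQ => hdec.mem_poly Q hQ.1
  · intro Q hQ R hR hRne
    refine ⟨hdec.face_mem Q hQ.1 R hR hRne, ?_⟩
    obtain ⟨φ, hφ⟩ := hR
    intro y hy
    rw [hφ] at hy
    exact hQ.2 hy.1
  · exact fun Q hQ Q' hQ' => hdec.inter_face Q hQ.1 Q' hQ'.1
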